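/- arXiv:2502.03073 — 2 statements merged into one kernel-verified Lean document; each statement's English description precedes it below -/
import Mathlib

section
/- Let N ≥ 2, 0 < k < N, and 1 ≤ j. The number of paths w : Fin N → Bool with w(0) = true, w(N−1) = false, exactly k visits to S1, and exactly j descents equals C(k−1, j−1)·C(N−k−1, j−1). (Such a path consists of j maximal blocks of trues and j maximal blocks of falses; distributing k trues over j nonempty blocks and N−k falses over j nonempty blocks gives the two weak-composition counts.) -/
/-!
Count the paths of a given length that start in `true` by final state, number of visits to
`true` and number of descents. Appending one step gives a Pascal-type recursion, in which a
`false` appended after a `true` creates a descent. For paths with `k + 1` trues and `l + 1`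
falses, the counts `C(k, j) C(l, j)` (ending in `false`, `j + 1` descents) and
`C(k, j + 1) C(l, j)` (ending in `true`, `j + 1` descents) satisfy this recursion, which gives
the formula by induction on `k + l`.
-/

open Finset

/-- Transition probability of the two-state chain: `false` is S0, `true` is S1. -/
def mcStep (p00 p01 p10 p11 : ℝ) : Bool → Bool → ℝ
  | false, false => p00
  | false, true  => p01
  | true,  false => p10
  | true,  true  => p11

/-- Weight of a path `w : Fin N → Bool`: product over `i = 0, …, N-2` of the
transition probability from `w i` to `w (i+1)`; equals `1` when `N = 1`. -/
def pathWeight (p00 p01 p10 p11 : ℝ) {N : ℕ} (w : Fin N → Bool) : ℝ :=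
  ∏ i : Fin (N - 1),
    mcStep p00 p01 p10 p11
      (w ⟨i.val, by have := i.isLt; omega⟩)
      (w ⟨i.val + 1, by have := i.isLt; omega⟩)

/-- Number of visits to S1 (i.e. `true`) of a path. -/
def visitsS1 {N : ℕ} (w : Fin N → Bool) : ℕ :=
  (Finset.univ.filter fun i : Fin N => w i = true).card

/-- Number of descents (indices `i ≤ N-2` with `w i = true` and `w (i+1) = false`). -/
def descents {N : ℕ} (w : Fin N → Bool) : ℕ :=
  (Finset.univ.filter fun i : Fin (N - 1) =>
    w ⟨i.val, by have := i.isLt; omega⟩ = true ∧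
    w ⟨i.val + 1, by have := i.isLt; omega⟩ = false).card

/-- Number of ascents (indices `i ≤ N-2` with `w i = false` and `w (i+1) = true`). -/
def ascents {N : ℕ} (w : Fin N → Bool) : ℕ :=
  (Finset.univ.filter fun i : Fin (N - 1) =>
    w ⟨i.val, by have := i.isLt; omega⟩ = false ∧
    w ⟨i.val + 1, by have := i.isLt; omega⟩ = true).card

def pathCount (M : ℕ) (b : Bool) (k j : ℕ) : ℕ :=
  #{w : Fin (M + 1) → Bool |
    w 0 = true ∧ w (Fin.last M) = b ∧ visitsS1 w = k ∧ descents w = j}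

lemma visitsS1_snoc {n : ℕ} (v : Fin n → Bool) (b : Bool) :
    visitsS1 (Fin.snoc v b : Fin (n + 1) → Bool) = visitsS1 v + b.toNat := by
  simp only [visitsS1, card_filter, Fin.sum_univ_castSucc, Fin.snoc_castSucc, Fin.snoc_last]
  cases b <;> rfl

lemma visitsS1_eq_iff {n : ℕ} (w : Fin n → Bool) : visitsS1 w = n ↔ ∀ i, w i = true := by
  have := card_filter_eq_iff (s := univ) (p := fun i : Fin n => w i = true)
  simpa [visitsS1] using this

lemma descents_eq_card {n : ℕ} (w : Fin (n + 1) → Bool) :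
    descents w = #{i : Fin n | w i.castSucc = true ∧ w i.succ = false} := rfl

lemma descents_snoc {n : ℕ} (v : Fin (n + 1) → Bool) (b : Bool) :
    descents (Fin.snoc v b : Fin (n + 2) → Bool) =
      descents v + (v (Fin.last n) && !b).toNat := by
  simp only [descents_eq_card, card_filter, Fin.sum_univ_castSucc, Fin.succ_castSucc,
    Fin.snoc_castSucc, Fin.succ_last, Fin.snoc_last]
  cases v (Fin.last n) <;> cases b <;> rfl

lemma eq_true_of_descents_eq_zero {n : ℕ} {w : Fin (n + 1) → Bool} (h0 : w 0 = true)
    (hw : descents w = 0) (i : Fin (n + 1)) : w i = true := by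
  rw [descents_eq_card, card_filter_eq_zero_iff] at hw
  induction i using Fin.induction with
  | zero => exact h0
  | succ i ih => simpa [ih] using hw i (mem_univ _)

lemma card_filter_snoc {α : Type*} [Fintype α] {n : ℕ} (P : (Fin (n + 1) → α) → Prop)
    [DecidablePred P] :
    #{w | P w} = ∑ a, #{v : Fin n → α | P (Fin.snoc v a)} := by
  simp only [card_filter]
  rw [← Fintype.sum_equiv (Fin.snocEquiv fun _ => α)
    (fun p => if P (Fin.snoc p.2 p.1) then 1 else 0) _ fun _ => rfl, Fintype.sum_prod_type]

lemma card_filter_eq_sum_card_fiber {α β : Type*} [Fintype α] [Fintype β] [DecidableEq β]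
    (f : α → β) (P : β → α → Prop) [∀ b, DecidablePred (P b)] :
    #{x | P (f x) x} = ∑ b, #{x | f x = b ∧ P b x} := by
  rw [card_eq_sum_card_fiberwise (f := f) (t := univ) (by simp)]
  refine sum_congr rfl fun b _ => ?_
  rw [filter_filter]
  congr 1
  exact filter_congr fun x _ =>
    ⟨fun ⟨h, hb⟩ => ⟨hb, hb ▸ h⟩, fun ⟨hb, h⟩ => ⟨hb ▸ h, hb⟩⟩

lemma pathCount_succ (M : ℕ) (b : Bool) (k j : ℕ) :
    pathCount (M + 1) b k j = ∑ a, #{v : Fin (M + 1) → Bool | v 0 = true ∧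
      v (Fin.last M) = a ∧ visitsS1 v + b.toNat = k ∧ descents v + (a && !b).toNat = j} :=
  calc pathCount (M + 1) b k j
      = #{v : Fin (M + 1) → Bool | v 0 = true ∧ visitsS1 v + b.toNat = k ∧
          descents v + (v (Fin.last M) && !b).toNat = j} := by
        rw [pathCount, card_filter_snoc, Fintype.sum_bool]
        cases b <;> simp [Fin.snoc_apply_zero, visitsS1_snoc, descents_snoc]
    _ = _ := by
        rw [card_filter_eq_sum_card_fiber (fun v => v (Fin.last M))
          fun a v => v 0 = true ∧ visitsS1 v + b.toNat = k ∧ descents v + (a && !b).toNat = j]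
        simp only [and_left_comm]

lemma pathCount_succ_false (M k j : ℕ) :
    pathCount (M + 1) false k (j + 1) = pathCount M false k (j + 1) + pathCount M true k j := by
  rw [pathCount_succ, Fintype.sum_bool, add_comm]
  simp [pathCount]

lemma pathCount_succ_true (M k j : ℕ) :
    pathCount (M + 1) true (k + 1) j = pathCount M false k j + pathCount M true k j := by
  rw [pathCount_succ, Fintype.sum_bool, add_comm]
  simp [pathCount]

lemma pathCount_zero_visits (M : ℕ) (b : Bool) (j : ℕ) : pathCount M b 0 j = 0 := by
  refine card_eq_zero.2 (filter_eq_empty_iff.2 fun w _ ⟨h0, _, hv, _⟩ => ?_)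
  exact card_ne_zero_of_mem (mem_filter.2 ⟨mem_univ 0, h0⟩) hv

lemma pathCount_false_all_visits (M j : ℕ) : pathCount M false (M + 1) j = 0 := by
  refine card_eq_zero.2 (filter_eq_empty_iff.2 fun w _ ⟨_, hl, hv, _⟩ => ?_)
  simp [(visitsS1_eq_iff w).1 hv] at hl

lemma pathCount_true_all_visits (M j : ℕ) :
    pathCount M true (M + 1) j = if j = 0 then 1 else 0 := by
  have hdesc : descents (fun _ : Fin (M + 1) => true) = 0 := by simp [descents_eq_card]
  have hfilter : ({w : Fin (M + 1) → Bool | w 0 = true ∧ w (Fin.last M) = true ∧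
      visitsS1 w = M + 1 ∧ descents w = j} : Finset _) =
      ({w | w = (fun _ => true) ∧ j = 0} : Finset _) := by
    refine filter_congr fun w _ => ⟨fun ⟨_, _, hv, hj⟩ => ?_, ?_⟩
    · obtain rfl : w = fun _ => true := funext ((visitsS1_eq_iff w).1 hv)
      exact ⟨rfl, hdesc ▸ hj.symm⟩
    · rintro ⟨rfl, rfl⟩
      exact ⟨rfl, rfl, (visitsS1_eq_iff _).2 fun _ => rfl, hdesc⟩
  rw [pathCount, hfilter]
  split_ifs with hj <;> simp [hj, filter_eq']

lemma pathCount_true_zero_descents {M k : ℕ} (hk : k ≠ M + 1) : pathCount M true k 0 = 0 := by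
  refine card_eq_zero.2 (filter_eq_empty_iff.2 fun w _ ⟨h0, _, hv, hd⟩ => hk ?_)
  rw [← hv, visitsS1_eq_iff]
  exact eq_true_of_descents_eq_zero h0 hd

lemma pathCount_false_succ_falses {k l : ℕ}
    (hF : ∀ j, pathCount (k + l + 1) false (k + 1) (j + 1) = k.choose j * l.choose j)
    (hT : ∀ j, pathCount (k + l + 1) true (k + 1) (j + 1) = k.choose (j + 1) * l.choose j)
    (j : ℕ) :
    pathCount (k + (l + 1) + 1) false (k + 1) (j + 1) = k.choose j * (l + 1).choose j := by
  rw [← add_assoc, pathCount_succ_false, hF]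
  cases j with
  | zero => simp [pathCount_true_zero_descents (show k + 1 ≠ k + l + 1 + 1 by omega)]
  | succ j => rw [hT, Nat.choose_succ_succ' l]; ring

lemma pathCount_true_succ_trues {k l : ℕ}
    (hF : ∀ j, pathCount (k + l + 1) false (k + 1) (j + 1) = k.choose j * l.choose j)
    (hT : ∀ j, pathCount (k + l + 1) true (k + 1) (j + 1) = k.choose (j + 1) * l.choose j)
    (j : ℕ) :
    pathCount (k + 1 + l + 1) true (k + 1 + 1) (j + 1) = (k + 1).choose (j + 1) * l.choose j := by
  rw [Nat.add_right_comm k 1 l, pathCount_succ_true, hF, hT, Nat.choose_succ_succ' k, add_mul]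

lemma pathCount_false_one_false (k j : ℕ) :
    pathCount (k + 0 + 1) false (k + 1) (j + 1) = k.choose j * (0 : ℕ).choose j := by
  rw [add_zero, pathCount_succ_false, pathCount_false_all_visits, pathCount_true_all_visits]
  cases j <;> simp

lemma pathCount_true_one_true (l j : ℕ) :
    pathCount (0 + l + 1) true (0 + 1) (j + 1) = (0 : ℕ).choose (j + 1) * l.choose j := by
  rw [zero_add, pathCount_succ_true, pathCount_zero_visits, pathCount_zero_visits]
  simp

theorem pathCount_eq_choose_mul_choose (k l : ℕ) :
    (∀ j, pathCount (k + l + 1) false (k + 1) (j + 1) = k.choose j * l.choose j) ∧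
    (∀ j, pathCount (k + l + 1) true (k + 1) (j + 1) = k.choose (j + 1) * l.choose j) := by
  obtain ⟨n, hn⟩ : ∃ n, k + l = n := ⟨_, rfl⟩
  induction n using Nat.strong_induction_on generalizing k l with
  | _ n ih =>
    refine ⟨fun j => ?_, fun j => ?_⟩
    · cases l with
      | zero => exact pathCount_false_one_false k j
      | succ l =>
        obtain ⟨hF, hT⟩ := ih (k + l) (by omega) k l rfl
        exact pathCount_false_succ_falses hF hT j
    · cases k with
      | zero => exact pathCount_true_one_true l j
      | succ k =>
        obtain ⟨hF, hT⟩ := ih (k + l) (by omega) k l rfl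
        exact pathCount_true_succ_trues hF hT j

theorem stmt8 (N k j : ℕ) (hk0 : 0 < k) (hkN : k < N) (hj : 1 ≤ j) :
    (Finset.univ.filter (fun w : Fin N → Bool =>
        w ⟨0, by omega⟩ = true ∧ w ⟨N - 1, by omega⟩ = false ∧
        visitsS1 w = k ∧ descents w = j)).card =
    Nat.choose (k - 1) (j - 1) * Nat.choose (N - k - 1) (j - 1) := by
  obtain ⟨k, rfl⟩ : ∃ k', k = k' + 1 := ⟨k - 1, by omega⟩
  obtain ⟨j, rfl⟩ : ∃ j', j = j' + 1 := ⟨j - 1, by omega⟩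
  obtain ⟨l, rfl⟩ : ∃ l, N = k + l + 2 := ⟨N - k - 2, by omega⟩
  rw [Nat.add_sub_cancel, Nat.add_sub_cancel, show k + l + 2 - (k + 1) - 1 = l by omega]
  exact (pathCount_eq_choose_mul_choose k l).1 j
end

section
/- (Part X of the proof of Theorem 1.) Let N ≥ 2 and 0 < k < N. Then the sum, over all paths w : Fin N → Bool with w(0) = true, w(N−1) = false, and exactly k visits to S1, of the weight of w equals ∑_{j=1}^{min(k, N−k)} C(k−1, j−1)·p11^{k−j}·p10^{j}·C(N−k−1, j−1)·p01^{j−1}·p00^{N−k−j}. -/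
open Finset

/-- number of compositions of `m` into `j` positive parts -/
def myC : ℕ → ℕ → ℕ
  | 0, 0 => 1
  | 0, _+1 => 0
  | _+1, 0 => 0
  | m+1, j+1 => m.choose j

lemma myC_succ_succ (m j : ℕ) : myC (m+1) (j+1) = m.choose j := rfl

lemma myC_zero_right (m : ℕ) : myC (m+1) 0 = 0 := rfl

lemma myC_eq_zero {m j : ℕ} (h : m < j) : myC m j = 0 := by
  match m, j with
  | 0, j+1 => rfl
  | m+1, j+1 => rw [myC_succ_succ]; exact Nat.choose_eq_zero_of_lt (by omega)

lemma myC_pascal (m j : ℕ) : myC (m+1) (j+1) = myC m (j+1) + myC m j := by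
  match m, j with
  | 0, 0 => rfl
  | 0, j+1 => simp [myC, Nat.choose_eq_zero_of_lt]
  | m+1, 0 => simp [myC]
  | m+1, j+1 => rw [myC_succ_succ, myC_succ_succ, myC_succ_succ, Nat.choose_succ_succ']; ring

variable (p00 p01 p10 p11 : ℝ)

/-- sum of weights of paths of length n+1 starting `true`, ending `e`, with `k` visits -/
def Tsum (e : Bool) (n k : ℕ) : ℝ :=
  ∑ w ∈ Finset.univ.filter (fun w : Fin (n+1) → Bool =>
      w 0 = true ∧ w (Fin.last n) = e ∧ visitsS1 w = k),
    pathWeight p00 p01 p10 p11 w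

def Ft (n k : ℕ) : ℝ :=
  ∑ j ∈ range (n+1),
    ((myC k (j+1) * myC (n+1-k) j : ℕ) : ℝ) * p11^(k-1-j) * p10^j * p01^j * p00^(n+1-k-j)

def Ff (n k : ℕ) : ℝ :=
  ∑ j ∈ range (n+1),
    ((myC k (j+1) * myC (n+1-k) (j+1) : ℕ) : ℝ) * p11^(k-1-j) * p10^(j+1) * p01^j * p00^(n-k-j)

lemma Ft_zero (n : ℕ) : Ft p00 p01 p10 p11 n 0 = 0 := by
  unfold Ft; apply Finset.sum_eq_zero; intro j _; simp [myC_eq_zero]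

lemma Ff_zero (n : ℕ) : Ff p00 p01 p10 p11 n 0 = 0 := by
  unfold Ff; apply Finset.sum_eq_zero; intro j _; simp [myC_eq_zero]

lemma snoc_mk_lt {m : ℕ} (v : Fin (m+1) → Bool) (e : Bool) (a : ℕ) (h : a < m+1) (h2 : a < m+2) :
    (Fin.snoc v e : Fin (m+2) → Bool) ⟨a, h2⟩ = v ⟨a, h⟩ := by
  have : (⟨a, h2⟩ : Fin (m+2)) = Fin.castSucc ⟨a, h⟩ := rfl
  rw [this, Fin.snoc_castSucc]

lemma snoc_mk_last {m : ℕ} (v : Fin (m+1) → Bool) (e : Bool) (h2 : m+1 < m+2) :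
    (Fin.snoc v e : Fin (m+2) → Bool) ⟨m+1, h2⟩ = e := by
  have : (⟨m+1, h2⟩ : Fin (m+2)) = Fin.last (m+1) := rfl
  rw [this, Fin.snoc_last]

lemma visitsS1_snoc_s12 {m : ℕ} (v : Fin (m+1) → Bool) (e : Bool) :
    visitsS1 (Fin.snoc v e : Fin (m+2) → Bool) = visitsS1 v + (if e then 1 else 0) := by
  unfold visitsS1
  rw [Finset.card_filter, Finset.card_filter, Fin.sum_univ_castSucc]
  simp [Fin.snoc_castSucc, Fin.snoc_last]

lemma pathWeight_snoc {m : ℕ} (v : Fin (m+1) → Bool) (e : Bool) :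
    pathWeight p00 p01 p10 p11 (Fin.snoc v e : Fin (m+2) → Bool)
      = pathWeight p00 p01 p10 p11 v * mcStep p00 p01 p10 p11 (v (Fin.last m)) e := by
  show (∏ i : Fin (m+1), mcStep p00 p01 p10 p11
      ((Fin.snoc v e : Fin (m+2) → Bool) ⟨i.val, by omega⟩)
      ((Fin.snoc v e : Fin (m+2) → Bool) ⟨i.val + 1, by omega⟩)) = _
  rw [Fin.prod_univ_castSucc]
  congr 1
  · apply Finset.prod_congr rfl
    intro i _
    simp only [Fin.coe_castSucc]
    rw [snoc_mk_lt v e i.val (by omega) (by omega),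
      snoc_mk_lt v e (i.val+1) (by omega) (by omega)]
  · simp only [Fin.val_last]
    rw [snoc_mk_lt v e m (by omega) (by omega), snoc_mk_last]; rfl

lemma one_le_visits {m : ℕ} (w : Fin (m+1) → Bool) (h : w 0 = true) : 1 ≤ visitsS1 w := by
  rw [Nat.succ_le_iff, visitsS1, Finset.card_pos]
  exact ⟨0, by simp [h]⟩

lemma visits_last {m : ℕ} (w : Fin (m+1) → Bool) (h : w (Fin.last m) = true) : 1 ≤ visitsS1 w := by
  rw [Nat.succ_le_iff, visitsS1, Finset.card_pos]
  exact ⟨Fin.last m, by simp [h]⟩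

lemma Tsum_rec (e : Bool) (n k : ℕ) :
    Tsum p00 p01 p10 p11 e (n+1) k
      = mcStep p00 p01 p10 p11 true e * Tsum p00 p01 p10 p11 true n (k - (if e then 1 else 0))
      + mcStep p00 p01 p10 p11 false e * Tsum p00 p01 p10 p11 false n (k - (if e then 1 else 0)) := by
  classical
  set be : ℕ := if e then 1 else 0 with hbe
  have key : Tsum p00 p01 p10 p11 e (n+1) k
      = ∑ v ∈ Finset.univ.filter (fun v : Fin (n+1) → Bool =>
          v 0 = true ∧ visitsS1 v = k - be),
          pathWeight p00 p01 p10 p11 v * mcStep p00 p01 p10 p11 (v (Fin.last n)) e := by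
    unfold Tsum
    apply Finset.sum_nbij' (i := fun w => Fin.init w) (j := fun v => (Fin.snoc v e : Fin (n+2) → Bool))
    · intro w hw
      simp only [Finset.mem_filter, Finset.mem_univ, true_and] at hw ⊢
      obtain ⟨h0, hl, hv⟩ := hw
      constructor
      · show w (Fin.castSucc 0) = true
        exact h0
      · have hsnoc : Fin.snoc (Fin.init w) (w (Fin.last (n+1))) = w := Fin.snoc_init_self w
        have := visitsS1_snoc_s12 (Fin.init w) (w (Fin.last (n+1)))
        rw [hsnoc, hl, hv] at this
        omega
    · intro v hv
      simp only [Finset.mem_filter, Finset.mem_univ, true_and] at hv ⊢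
      obtain ⟨h0, hk⟩ := hv
      have h1 : 1 ≤ visitsS1 v := one_le_visits v h0
      refine ⟨?_, ?_, ?_⟩
      · show (Fin.snoc v e : Fin (n+2) → Bool) ⟨0, by omega⟩ = true
        rw [snoc_mk_lt v e 0 (by omega) (by omega)]; exact h0
      · simp [Fin.snoc_last]
      · rw [visitsS1_snoc_s12, hk, ← hbe]
        rcases e with _ | _
        · simp [hbe]
        · simp only [if_true] at hbe ⊢
          omega
    · intro w hw
      simp only [Finset.mem_filter, Finset.mem_univ, true_and] at hw
      rw [← hw.2.1]
      exact Fin.snoc_init_self w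
    · intro v _
      simp [Fin.init_snoc]
    · intro w hw
      simp only [Finset.mem_filter, Finset.mem_univ, true_and] at hw
      conv_lhs => rw [← Fin.snoc_init_self w]
      rw [pathWeight_snoc, hw.2.1]
  rw [key, ← Finset.sum_filter_add_sum_filter_not _ (fun v => v (Fin.last n) = true)]
  have hsplit : ∀ b : Bool,
      ∑ v ∈ (Finset.univ.filter (fun v : Fin (n+1) → Bool =>
          v 0 = true ∧ visitsS1 v = k - be)).filter (fun v => v (Fin.last n) = b),
        pathWeight p00 p01 p10 p11 v * mcStep p00 p01 p10 p11 (v (Fin.last n)) e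
      = mcStep p00 p01 p10 p11 b e * Tsum p00 p01 p10 p11 b n (k - be) := by
    intro b
    rw [Finset.filter_filter]
    have hpred : (Finset.univ.filter (fun v : Fin (n+1) → Bool =>
          (v 0 = true ∧ visitsS1 v = k - be) ∧ v (Fin.last n) = b))
        = Finset.univ.filter (fun v : Fin (n+1) → Bool =>
          v 0 = true ∧ v (Fin.last n) = b ∧ visitsS1 v = k - be) := by
      apply Finset.filter_congr; intro x _; tauto
    rw [hpred]
    unfold Tsum
    rw [Finset.mul_sum]
    apply Finset.sum_congr rfl
    intro x hx
    simp only [Finset.mem_filter] at hx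
    rw [hx.2.2.1]
    ring
  rw [hsplit true]
  simp only [Bool.not_eq_true]
  rw [hsplit false]

lemma Tsum_base (e : Bool) (k : ℕ) :
    Tsum p00 p01 p10 p11 e 0 k = if (e = true ∧ k = 1) then 1 else 0 := by
  unfold Tsum
  have hpw : ∀ w : Fin 1 → Bool, pathWeight p00 p01 p10 p11 w = 1 := by
    intro w; unfold pathWeight; simp
  have hvis : ∀ w : Fin 1 → Bool, visitsS1 w = if w 0 = true then 1 else 0 := by
    intro w; unfold visitsS1; rw [Finset.card_filter, Fin.sum_univ_one]
  rw [Finset.sum_congr rfl fun w _ => hpw w, Finset.sum_const, nsmul_eq_mul, mul_one]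
  by_cases h : e = true ∧ k = 1
  · obtain ⟨he, hk⟩ := h
    subst he; subst hk
    rw [if_pos ⟨rfl, rfl⟩]
    have hst : Finset.univ.filter (fun w : Fin 1 → Bool =>
        w 0 = true ∧ w (Fin.last 0) = true ∧ visitsS1 w = 1) = {fun _ => true} := by
      ext w
      simp only [Finset.mem_filter, Finset.mem_univ, true_and, Finset.mem_singleton]
      constructor
      · rintro ⟨h0, -, -⟩
        funext i
        rw [Fin.fin_one_eq_zero i, h0]
      · rintro rfl
        refine ⟨rfl, rfl, ?_⟩
        rw [hvis]; simp
    rw [hst]; simp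
  · rw [if_neg h]
    have hst : Finset.univ.filter (fun w : Fin 1 → Bool =>
        w 0 = true ∧ w (Fin.last 0) = e ∧ visitsS1 w = k) = ∅ := by
      rw [Finset.filter_eq_empty_iff]
      rintro w - ⟨h0, hl, hv⟩
      apply h
      constructor
      · rw [← hl, Fin.fin_one_eq_zero (Fin.last 0), h0]
      · rw [← hv, hvis, h0]; simp
    rw [hst]; simp

lemma Ft_rec (n k : ℕ) (hk : k ≤ n+2) :
    Ft p00 p01 p10 p11 (n+1) k
      = p11 * Ft p00 p01 p10 p11 n (k-1) + p01 * Ff p00 p01 p10 p11 n (k-1) := by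
  rcases k with _ | k'
  · simp [Ft_zero, Ff_zero]
  · have hk' : k' ≤ n+1 := by omega
    simp only [Nat.succ_sub_one]
    unfold Ft Ff
    have e1 : n+1+1-(k'+1) = n+1-k' := by omega
    simp only [e1, Nat.succ_sub_one]
    have hsplit : ∀ j : ℕ,
        ((myC (k'+1) (j+1) * myC (n+1-k') j : ℕ) : ℝ) * p11^(k'-j) * p10^j * p01^j * p00^(n+1-k'-j)
        = ((myC k' (j+1) * myC (n+1-k') j : ℕ) : ℝ) * p11^(k'-j) * p10^j * p01^j * p00^(n+1-k'-j)
        + ((myC k' j * myC (n+1-k') j : ℕ) : ℝ) * p11^(k'-j) * p10^j * p01^j * p00^(n+1-k'-j) := by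
      intro j; rw [myC_pascal]; push_cast; ring
    rw [Finset.sum_congr rfl fun j _ => hsplit j, Finset.sum_add_distrib]
    congr 1
    · -- A part
      rw [Finset.sum_range_succ]
      have hA0 : ((myC k' (n+1+1) * myC (n+1-k') (n+1) : ℕ) : ℝ)
          * p11^(k'-(n+1)) * p10^(n+1) * p01^(n+1) * p00^(n+1-k'-(n+1)) = 0 := by
        rw [myC_eq_zero (show k' < n+1+1 by omega)]; simp
      rw [hA0, add_zero, Finset.mul_sum]
      apply Finset.sum_congr rfl
      intro j _
      by_cases hjk : j + 1 ≤ k'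
      · rw [show k' - j = (k'-1-j)+1 by omega, pow_succ]; ring
      · rw [myC_eq_zero (show k' < j+1 by omega)]; simp
    · -- B part
      rw [Finset.sum_range_succ']
      have hB0 : ((myC k' 0 * myC (n+1-k') 0 : ℕ) : ℝ)
          * p11^(k'-0) * p10^0 * p01^0 * p00^(n+1-k'-0) = 0 := by
        rcases k' with _ | k''
        · rw [show n+1-0 = n+1 by omega, myC_zero_right]; simp
        · rw [myC_zero_right]; simp
      rw [hB0, add_zero, Finset.mul_sum]
      apply Finset.sum_congr rfl
      intro j _
      rw [show k' - (j+1) = k'-1-j by omega, show n+1-k'-(j+1) = n-k'-j by omega,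
        pow_succ p01 j]
      ring

lemma Ff_rec (n k : ℕ) (hk : k ≤ n+1) :
    Ff p00 p01 p10 p11 (n+1) k
      = p10 * Ft p00 p01 p10 p11 n k + p00 * Ff p00 p01 p10 p11 n k := by
  unfold Ft Ff
  have e1 : n+1+1-k = (n+1-k)+1 := by omega
  simp only [e1]
  have hsplit : ∀ j : ℕ,
      ((myC k (j+1) * myC ((n+1-k)+1) (j+1) : ℕ) : ℝ) * p11^(k-1-j) * p10^(j+1) * p01^j * p00^(n+1-k-j)
      = ((myC k (j+1) * myC (n+1-k) (j+1) : ℕ) : ℝ) * p11^(k-1-j) * p10^(j+1) * p01^j * p00^(n+1-k-j)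
      + ((myC k (j+1) * myC (n+1-k) j : ℕ) : ℝ) * p11^(k-1-j) * p10^(j+1) * p01^j * p00^(n+1-k-j) := by
    intro j; rw [myC_pascal]; push_cast; ring
  rw [Finset.sum_congr rfl fun j _ => hsplit j, Finset.sum_add_distrib, add_comm]
  congr 1
  · -- D part: matches p10 * Ft n k
    rw [Finset.sum_range_succ]
    have hD0 : ((myC k (n+1+1) * myC (n+1-k) (n+1) : ℕ) : ℝ)
        * p11^(k-1-(n+1)) * p10^(n+1+1) * p01^(n+1) * p00^(n+1-k-(n+1)) = 0 := by
      rw [myC_eq_zero (show k < n+1+1 by omega)]; simp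
    rw [hD0, add_zero, Finset.mul_sum]
    apply Finset.sum_congr rfl
    intro j _
    rw [pow_succ p10 j]; ring
  · -- C part: matches p00 * Ff n k
    rw [Finset.sum_range_succ]
    have hC0 : ((myC k (n+1+1) * myC (n+1-k) (n+1+1) : ℕ) : ℝ)
        * p11^(k-1-(n+1)) * p10^(n+1+1) * p01^(n+1) * p00^(n+1-k-(n+1)) = 0 := by
      rw [myC_eq_zero (show k < n+1+1 by omega)]; simp
    rw [hC0, add_zero, Finset.mul_sum]
    apply Finset.sum_congr rfl
    intro j _
    by_cases hj : j + 1 ≤ n+1-k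
    · rw [show n+1-k-j = (n-k-j)+1 by omega, pow_succ]; ring
    · rw [myC_eq_zero (show n+1-k < j+1 by omega)]
      simp

lemma T_eq (n : ℕ) : ∀ k ≤ n+1,
    Tsum p00 p01 p10 p11 true n k = Ft p00 p01 p10 p11 n k ∧
    Tsum p00 p01 p10 p11 false n k = Ff p00 p01 p10 p11 n k := by
  induction n with
  | zero =>
    intro k hk
    interval_cases k
    · constructor <;> simp [Tsum_base, Ft_zero, Ff_zero]
    · constructor
      · rw [Tsum_base]
        simp only [if_pos (⟨rfl, rfl⟩ : (true = true ∧ (1:ℕ) = 1))]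
        unfold Ft
        norm_num [myC]
      · rw [Tsum_base]
        norm_num
        unfold Ff
        norm_num [myC]
  | succ n ih =>
    intro k hk
    constructor
    · rw [Tsum_rec, Ft_rec p00 p01 p10 p11 n k hk]
      simp only [if_true]
      rw [(ih (k-1) (by omega)).1, (ih (k-1) (by omega)).2]
      rfl
    · by_cases hk' : k ≤ n+1
      · rw [Tsum_rec, Ff_rec p00 p01 p10 p11 n k hk']
        norm_num
        rw [(ih k hk').1, (ih k hk').2]
        rfl
      · have hk2 : k = n+2 := by omega
        subst hk2
        have hF : Ff p00 p01 p10 p11 (n+1) (n+2) = 0 := by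
          unfold Ff
          apply Finset.sum_eq_zero; intro j _
          rw [show n+1+1-(n+2) = 0 by omega, myC_eq_zero (show 0 < j+1 by omega)]
          simp
        have hT : Tsum p00 p01 p10 p11 false (n+1) (n+2) = 0 := by
          unfold Tsum
          have hereEmpty : Finset.univ.filter (fun w : Fin (n+2) → Bool =>
              w 0 = true ∧ w (Fin.last (n+1)) = false ∧ visitsS1 w = n+2) = ∅ := by
            rw [Finset.filter_eq_empty_iff]
            rintro w - ⟨h0, hl, hv⟩
            have huniv : (Finset.univ.filter fun i : Fin (n+2) => w i = true) = Finset.univ := by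
              apply Finset.eq_univ_of_card
              rw [Fintype.card_fin]
              exact hv
            have hmem := (Finset.mem_filter.mp (huniv ▸ Finset.mem_univ (Fin.last (n+1)))).2
            rw [hl] at hmem
            exact Bool.false_ne_true hmem
          rw [hereEmpty, Finset.sum_empty]
        rw [hT, hF]

theorem stmt12 (p00 p01 p10 p11 : ℝ) (N k : ℕ) (hN : 2 ≤ N) (hk0 : 0 < k) (hkN : k < N) :
    ∑ w ∈ Finset.univ.filter (fun w : Fin N → Bool =>
        w ⟨0, by omega⟩ = true ∧ w ⟨N - 1, by omega⟩ = false ∧ visitsS1 w = k),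
      pathWeight p00 p01 p10 p11 w =
    ∑ j ∈ Finset.Icc 1 (min k (N - k)),
        (Nat.choose (k - 1) (j - 1) : ℝ) * p11 ^ (k - j) * p10 ^ j *
          (Nat.choose (N - k - 1) (j - 1) : ℝ) * p01 ^ (j - 1) * p00 ^ (N - k - j) := by

  obtain ⟨n, rfl⟩ : ∃ n, N = n + 2 := ⟨N - 2, by omega⟩
  have hkn : k ≤ n + 1 := by omega
  have hL : ∑ w ∈ Finset.univ.filter (fun w : Fin (n+2) → Bool =>
        w ⟨0, by omega⟩ = true ∧ w ⟨n+2-1, by omega⟩ = false ∧ visitsS1 w = k),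
      pathWeight p00 p01 p10 p11 w = Tsum p00 p01 p10 p11 false (n+1) k := by
    unfold Tsum
    apply Finset.sum_congr _ (fun _ _ => rfl)
    apply Finset.filter_congr
    intro w _
    have h0 : (⟨0, by omega⟩ : Fin (n+2)) = 0 := by
      apply Fin.ext; simp
    have h1 : (⟨n+2-1, by omega⟩ : Fin (n+2)) = Fin.last (n+1) := by
      apply Fin.ext; simp [Fin.val_last]
    rw [h0, h1]
  rw [hL, (T_eq p00 p01 p10 p11 (n+1) k (by omega)).2]
  have hstep1 : ∑ j ∈ Finset.Icc 1 (min k (n+2-k)),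
        (Nat.choose (k - 1) (j - 1) : ℝ) * p11 ^ (k - j) * p10 ^ j *
          (Nat.choose (n+2 - k - 1) (j - 1) : ℝ) * p01 ^ (j - 1) * p00 ^ (n+2 - k - j)
      = ∑ j ∈ Finset.Icc 1 (n+2),
        (Nat.choose (k - 1) (j - 1) : ℝ) * p11 ^ (k - j) * p10 ^ j *
          (Nat.choose (n+2 - k - 1) (j - 1) : ℝ) * p01 ^ (j - 1) * p00 ^ (n+2 - k - j) := by
    apply Finset.sum_subset (Finset.Icc_subset_Icc_right (by omega))
    intro j hj hnj
    simp only [Finset.mem_Icc] at hj hnj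
    have hgt : min k (n+2-k) < j := by omega
    rcases min_lt_iff.mp hgt with h | h
    · rw [Nat.choose_eq_zero_of_lt (show k - 1 < j - 1 by omega)]
      simp
    · rw [Nat.choose_eq_zero_of_lt (show n+2-k-1 < j - 1 by omega)]
      simp
  have hstep2 : ∑ j ∈ Finset.Icc 1 (n+2),
        (Nat.choose (k - 1) (j - 1) : ℝ) * p11 ^ (k - j) * p10 ^ j *
          (Nat.choose (n+2 - k - 1) (j - 1) : ℝ) * p01 ^ (j - 1) * p00 ^ (n+2 - k - j)
      = ∑ j ∈ Finset.range (n+2),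
        (Nat.choose (k - 1) (j + 1 - 1) : ℝ) * p11 ^ (k - (j+1)) * p10 ^ (j+1) *
          (Nat.choose (n+2 - k - 1) (j + 1 - 1) : ℝ) * p01 ^ (j + 1 - 1) * p00 ^ (n+2 - k - (j+1)) := by
    apply Finset.sum_nbij' (i := fun j => j - 1) (j := fun j => j + 1)
    · intro a ha; simp only [Finset.mem_Icc] at ha; simp only [Finset.mem_range]; omega
    · intro a ha; simp only [Finset.mem_range] at ha; simp only [Finset.mem_Icc]; omega
    · intro a ha; simp only [Finset.mem_Icc] at ha; omega
    · intro a _; omega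
    · intro a ha
      simp only [Finset.mem_Icc] at ha
      rw [show a - 1 + 1 = a by omega]
  rw [hstep1, hstep2]
  unfold Ff
  apply Finset.sum_congr rfl
  intro j _
  have hC1 : myC k (j+1) = (k-1).choose j := by
    rcases k with _ | k''
    · omega
    · rfl
  have hC2 : myC (n+1+1-k) (j+1) = (n+1-k).choose j := by
    rw [show n+1+1-k = (n+1-k)+1 by omega, myC_succ_succ]
  rw [hC1, hC2, show n+2-k-1 = n+1-k by omega, show j+1-1 = j by omega,
    show k-(j+1) = k-1-j by omega, show n+2-k-(j+1) = n+1-k-j by omega]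
  push_cast
  ring
end
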